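/- Suppose m < n and n ≡ m (mod m+1). Then the polynomial f_m divides the polynomial f_n, where f_k is defined by f_1(λ) = -λ, f_2(λ) = λ² - 1, f_k(λ) = -λ·f_{k-1}(λ) - f_{k-2}(λ) for k ≥ 3. -/

import Mathlib

/-! Extending the sequence by `f 0 = 1`, it satisfies `g 0 = 1`, `g 1 = c`,
`g (k + 2) = c * g (k + 1) - g k` with `c = -X`, and hence the addition formula
`g (a + b + 2) = g (a + 1) * g (b + 1) - g a * g b`. Taking `b + 1 = m` shows that
`g (a + m + 1)` is congruent to a multiple of `g a` modulo `g m`, so `g m` divides every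
`g (m + k * (m + 1))`, and these are exactly the `g n` with `n ≡ m [MOD m + 1]`. -/

theorem Nat.eq_add_div_mul_of_modEq_self {m n : ℕ} (h : n ≡ m [MOD m + 1]) :
    n = m + n / (m + 1) * (m + 1) := by
  have hmod : n % (m + 1) = m := by rw [h, Nat.mod_eq_of_lt m.lt_succ_self]
  have := Nat.div_add_mod n (m + 1)
  rw [Nat.mul_comm] at this
  omega

namespace ThreeTermRecurrence

variable {R : Type*} [CommRing R] {c : R} {g : ℕ → R}

theorem apply_add_add_two (h0 : g 0 = 1) (h1 : g 1 = c)
    (hrec : ∀ k, g (k + 2) = c * g (k + 1) - g k) (a b : ℕ) :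
    g (a + b + 2) = g (a + 1) * g (b + 1) - g a * g b := by
  induction a generalizing b with
  | zero => rw [Nat.zero_add, hrec, h0, h1, one_mul]
  | succ a ih =>
    rw [show a + 1 + b + 2 = a + (b + 1) + 2 by omega, ih, hrec b, hrec a]
    ring

theorem dvd_add_mul (h0 : g 0 = 1) (h1 : g 1 = c)
    (hrec : ∀ k, g (k + 2) = c * g (k + 1) - g k) (m k : ℕ) :
    g (m + 1) ∣ g (m + 1 + k * (m + 2)) := by
  induction k with
  | zero => simp
  | succ k ih =>
    rw [show m + 1 + (k + 1) * (m + 2) = m + 1 + k * (m + 2) + m + 2 by ring,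
      apply_add_add_two h0 h1 hrec]
    exact dvd_sub (dvd_mul_left _ _) (ih.mul_right _)

theorem dvd_of_modEq (h0 : g 0 = 1) (h1 : g 1 = c)
    (hrec : ∀ k, g (k + 2) = c * g (k + 1) - g k) {m n : ℕ} (hcong : n ≡ m [MOD m + 1]) :
    g m ∣ g n := by
  rw [Nat.eq_add_div_mul_of_modEq_self hcong]
  cases m with
  | zero => simp [h0]
  | succ m => exact dvd_add_mul h0 h1 hrec m _

end ThreeTermRecurrence

open Polynomial in
theorem stmt_12_general (f : ℕ → Polynomial ℝ)
    (h1 : f 1 = -X) (h2 : f 2 = X ^ 2 - 1)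
    (hrec : ∀ k, 3 ≤ k → f k = -X * f (k - 1) - f (k - 2))
    (m n : ℕ) (hm : 1 ≤ m) (hcong : n ≡ m [MOD m + 1]) :
    f m ∣ f n := by
  set g : ℕ → ℝ[X] := Function.update f 0 1
  have hg0 : g 0 = 1 := Function.update_self 0 1 f
  have hgf : ∀ k, 1 ≤ k → g k = f k := fun k hk => Function.update_of_ne (by omega) _ _
  have hgrec : ∀ k, g (k + 2) = -X * g (k + 1) - g k := by
    rintro (_ | k)
    · rw [hgf 2 (by omega), hgf 1 le_rfl, hg0, h1, h2]
      ring
    · rw [hgf _ (by omega), hgf _ (by omega), hgf _ (by omega), hrec _ (by omega)]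
      rfl
  have hdvd := ThreeTermRecurrence.dvd_of_modEq hg0 ((hgf 1 le_rfl).trans h1) hgrec hcong
  have hmn : m ≤ n := by
    have := Nat.eq_add_div_mul_of_modEq_self hcong
    omega
  rw [← hgf m hm, ← hgf n (by omega)]
  exact hdvd

open Polynomial in
theorem stmt_12 (f : ℕ → Polynomial ℝ)
    (h1 : f 1 = -X) (h2 : f 2 = X ^ 2 - 1)
    (hrec : ∀ k, 3 ≤ k → f k = -X * f (k - 1) - f (k - 2))
    (m n : ℕ) (hm : 1 ≤ m) (hmn : m < n) (hcong : n ≡ m [MOD m + 1]) :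
    f m ∣ f n :=
  stmt_12_general f h1 h2 hrec m n hm hcong
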